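/- arXiv:2109.07400 — 5 statements merged into one kernel-verified Lean document; each statement's English description precedes it below -/
import Mathlib

section
/- Let (X, d_X) and (Y, d_Y) be metric spaces and f : X → Y a map. Suppose there exist a map g : Y → X that is Lipschitz with constant C_g and a map H : X × [0,1] → X that is Lipschitz with constant C_H (for the product metric) and satisfies H(x,0) = g(f(x)) and H(x,1) = x for every x ∈ X. Then for every subset A ⊆ Y one has diam(f⁻¹(A)) ≤ 2·C_H + C_g·diam(A), where diameters are valued in [0,∞]. In particular, every Lipschitz-homotopy equivalence between metric spaces is uniformly proper. -/
open MeasureTheory Metric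

/-- If `g : Y → X` is Lipschitz with constant `C_g` and `H : X × [0,1] → X` is a
Lipschitz homotopy (constant `C_H`, sum metric on the product) from `g ∘ f` to the identity,
then `diam (f ⁻¹' A) ≤ 2 C_H + C_g · diam A` for every `A ⊆ Y`. In particular every
Lipschitz-homotopy equivalence is uniformly proper. -/
theorem lipschitz_homotopy_inverse_uniformly_proper
    {X Y : Type*} [MetricSpace X] [MetricSpace Y]
    (f : X → Y) (g : Y → X) (H : X → ℝ → X) (Cg CH : NNReal)
    (hg : LipschitzWith Cg g)
    (hH : ∀ x x' : X, ∀ s s' : ℝ, s ∈ Set.Icc (0:ℝ) 1 → s' ∈ Set.Icc (0:ℝ) 1 →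
      dist (H x s) (H x' s') ≤ CH * (dist x x' + |s - s'|))
    (hH0 : ∀ x, H x 0 = g (f x)) (hH1 : ∀ x, H x 1 = x) :
    ∀ A : Set Y, EMetric.diam (f ⁻¹' A) ≤ 2 * (CH : ENNReal) + (Cg : ENNReal) * EMetric.diam A := by
  intro A
  apply EMetric.diam_le
  intro x hx x' hx'
  have h01 : (0:ℝ) ∈ Set.Icc (0:ℝ) 1 := by constructor <;> norm_num
  have h11 : (1:ℝ) ∈ Set.Icc (0:ℝ) 1 := by constructor <;> norm_num
  have h1 : dist x (H x 0) ≤ CH := by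
    have := hH x x 1 0 h11 h01
    simpa [hH1, dist_self] using this
  have h2 : dist (H x' 0) x' ≤ CH := by
    have := hH x' x' 0 1 h01 h11
    simpa [hH1, dist_self, abs_of_nonpos] using this
  have h3 : dist (H x 0) (H x' 0) ≤ Cg * dist (f x) (f x') := by
    rw [hH0, hH0]; exact hg.dist_le_mul _ _
  have hd : dist x x' ≤ 2 * CH + Cg * dist (f x) (f x') := by
    calc dist x x' ≤ dist x (H x 0) + dist (H x 0) (H x' 0) + dist (H x' 0) x' :=
          dist_triangle4 _ _ _ _
      _ ≤ CH + Cg * dist (f x) (f x') + CH := by gcongr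
      _ = 2 * CH + Cg * dist (f x) (f x') := by ring
  have hE : edist x x' ≤ 2 * (CH : ENNReal) + (Cg : ENNReal) * edist (f x) (f x') := by
    rw [edist_dist, edist_dist]
    calc ENNReal.ofReal (dist x x')
        ≤ ENNReal.ofReal (2 * CH + Cg * dist (f x) (f x')) := ENNReal.ofReal_le_ofReal hd
      _ ≤ ENNReal.ofReal (2 * CH) + ENNReal.ofReal (Cg * dist (f x) (f x')) :=
          ENNReal.ofReal_add_le
      _ = 2 * (CH : ENNReal) + (Cg : ENNReal) * ENNReal.ofReal (dist (f x) (f x')) := by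
          rw [ENNReal.ofReal_mul (by positivity), ENNReal.ofReal_mul (by positivity)]
          norm_num [ENNReal.ofReal_coe_nnreal]
  refine hE.trans ?_
  gcongr
  exact EMetric.edist_le_diam_of_mem hx hx'
end

section
/- Let (X, d_X) and (Y, d_Y) be metric spaces, and let f, F : X → Y be the two endpoints of a Lipschitz homotopy h : X × [0,1] → Y with Lipschitz constant C_h (for the product metric), i.e. h(x,0) = f(x) and h(x,1) = F(x) for all x. Then: (i) for every t ∈ [0,1] and every subset A ⊆ Y, {x ∈ X : h(x,t) ∈ A} ⊆ f⁻¹({y ∈ Y : dist(y,A) ≤ C_h·t}); (ii) if moreover there is a nondecreasing function α : [0,∞] → [0,∞] with diam(f⁻¹(B)) ≤ α(diam(B)) for every B ⊆ Y, then diam(F⁻¹(A)) ≤ α(diam(A) + 2·C_h) for every A ⊆ Y. In particular, if f is uniformly proper then so is F. -/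
open MeasureTheory Metric

/-!
At time `t` the homotopy stays within `C_h t` of `f`, so the preimage of `A` under any slice lies
in the `f`-preimage of the closed `C_h t`-thickening of `A`; a closed `r`-thickening enlarges the
diameter by at most `2 r`.
-/

open ENNReal NNReal Set

section

variable {X Y : Type*} [PseudoMetricSpace Y]

theorem preimage_subset_preimage_cthickening_of_dist_le {f g : X → Y} {δ : ℝ}
    (hfg : ∀ x, dist (f x) (g x) ≤ δ) (A : Set Y) : g ⁻¹' A ⊆ f ⁻¹' cthickening δ A :=
  fun x hx ↦ mem_cthickening_of_dist_le _ _ _ _ hx (hfg x)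

theorem ediam_preimage_le_of_dist_le [PseudoEMetricSpace X] {f g : X → Y} {δ : ℝ≥0}
    (hfg : ∀ x, dist (f x) (g x) ≤ δ) {α : ℝ≥0∞ → ℝ≥0∞} (hα : Monotone α)
    (hf : ∀ B : Set Y, ediam (f ⁻¹' B) ≤ α (ediam B)) (A : Set Y) :
    ediam (g ⁻¹' A) ≤ α (ediam A + 2 * δ) :=
  calc ediam (g ⁻¹' A) ≤ ediam (f ⁻¹' cthickening δ A) :=
        ediam_mono (preimage_subset_preimage_cthickening_of_dist_le hfg A)
    _ ≤ α (ediam (cthickening δ A)) := hf _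
    _ ≤ α (ediam A + 2 * δ) := hα (ediam_cthickening_le δ)

theorem dist_le_mul_of_lipschitz_homotopy [PseudoMetricSpace X] {h : X → ℝ → Y} {C : ℝ≥0}
    (hLip : ∀ x x' : X, ∀ s s' : ℝ, s ∈ Icc (0:ℝ) 1 → s' ∈ Icc (0:ℝ) 1 →
      dist (h x s) (h x' s') ≤ C * (dist x x' + |s - s'|))
    {t : ℝ} (ht : t ∈ Icc (0:ℝ) 1) (x : X) : dist (h x 0) (h x t) ≤ C * t := by
  simpa [abs_of_nonneg ht.1] using hLip x x 0 t (left_mem_Icc.2 zero_le_one) ht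

end

/-- For a Lipschitz homotopy `h` (constant `C_h`, sum metric on `X × [0,1]`)
between `f = h(·,0)` and `F = h(·,1)`:
(i) for `t ∈ [0,1]` and `A ⊆ Y`, `{x | h(x,t) ∈ A} ⊆ f⁻¹ {y | dist(y,A) ≤ C_h t}`;
(ii) if `α` is nondecreasing and `diam (f⁻¹ B) ≤ α (diam B)` for all `B`, then
`diam (F⁻¹ A) ≤ α (diam A + 2 C_h)` for all `A`. In particular, if `f` is uniformly proper
then so is `F`. -/
theorem lipschitz_homotopic_uniformly_proper
    {X Y : Type*} [MetricSpace X] [MetricSpace Y]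
    (f F : X → Y) (h : X → ℝ → Y) (Ch : NNReal)
    (hLip : ∀ x x' : X, ∀ s s' : ℝ, s ∈ Set.Icc (0:ℝ) 1 → s' ∈ Set.Icc (0:ℝ) 1 →
      dist (h x s) (h x' s') ≤ Ch * (dist x x' + |s - s'|))
    (h0 : ∀ x, h x 0 = f x) (h1 : ∀ x, h x 1 = F x) :
    (∀ t ∈ Set.Icc (0:ℝ) 1, ∀ A : Set Y,
      {x : X | h x t ∈ A} ⊆
        f ⁻¹' {y : Y | EMetric.infEdist y A ≤ (Ch : ENNReal) * ENNReal.ofReal t})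
    ∧ (∀ α : ENNReal → ENNReal, Monotone α →
        (∀ B : Set Y, EMetric.diam (f ⁻¹' B) ≤ α (EMetric.diam B)) →
        ∀ A : Set Y, EMetric.diam (F ⁻¹' A) ≤ α (EMetric.diam A + 2 * (Ch : ENNReal))) := by
  have hslice : ∀ t ∈ Icc (0:ℝ) 1, ∀ x, dist (f x) (h x t) ≤ Ch * t := fun t ht x ↦ by
    simpa only [h0] using dist_le_mul_of_lipschitz_homotopy hLip ht x
  refine ⟨fun t ht A ↦ ?_, fun α hα hf A ↦ ?_⟩
  · have hsub := preimage_subset_preimage_cthickening_of_dist_le (hslice t ht) A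
    rwa [cthickening, ENNReal.ofReal_mul Ch.coe_nonneg, ofReal_coe_nnreal] at hsub
  · have hfF : ∀ x, dist (f x) (F x) ≤ Ch := by
      simpa [h1] using hslice 1 (right_mem_Icc.2 zero_le_one)
    exact ediam_preimage_le_of_dist_le hfF hα hf A
end

section
/- Let (M,μ) and (N,ν) be σ-finite measure spaces and let K : M × N → ℂ be measurable. Suppose there exist constants L, R, S ≥ 0 such that |K(p,q)| ≤ L for all (p,q), μ({p ∈ M : K(p,q) ≠ 0}) ≤ R for every q ∈ N, and ν({q ∈ N : K(p,q) ≠ 0}) ≤ S for every p ∈ M. Then for every α ∈ L²(ν) the function p ↦ ∫_N K(p,q)·α(q) dν(q) belongs to L²(μ), and ∫_M |∫_N K(p,q)·α(q) dν(q)|² dμ(p) ≤ S·R·L²·∫_N |α(q)|² dν(q). In particular, the integral operator with kernel K is a bounded operator from L²(ν) to L²(μ) with norm at most √(S·R)·L. -/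
/-!
Schur test. Cauchy–Schwarz against the weight `|K(p, ·)|` gives
`|∫ K(p,q) α(q) dν|² ≤ (∫ |K(p,q)| dν) · ∫ |K(p,q)| |α(q)|² dν`. The first factor is at most
`L·S`; integrating the second over `p` and exchanging the integrals by Tonelli leaves
`∫ (∫ |K(p,q)| dμ) |α(q)|² dν ≤ L·R ∫ |α|² dν`. Each row and column integral of `|K|` is at most
`L` times the measure of the corresponding support.
-/

open MeasureTheory
open scoped ENNReal NNReal

section

variable {X : Type*} [MeasurableSpace X] {τ : Measure X}

theorem lintegral_enorm_le_mul_measure_support {E : Type*} [NormedAddCommGroup E] {f : X → E}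
    {C : ℝ≥0} (hC : ∀ x, ‖f x‖ ≤ C) :
    ∫⁻ x, ‖f x‖ₑ ∂τ ≤ C * τ (Function.support f) := by
  calc ∫⁻ x, ‖f x‖ₑ ∂τ ≤ ∫⁻ x, (Function.support f).indicator (fun _ ↦ (C : ℝ≥0∞)) x ∂τ := by
        refine lintegral_mono fun x ↦ ?_
        by_cases hx : f x = 0
        · simp [hx]
        · rw [Set.indicator_of_mem hx]
          exact enorm_le_coe.2 (hC x)
    _ ≤ C * τ (Function.support f) := lintegral_indicator_const_le _ _

theorem sq_lintegral_mul_le_lintegral_mul_lintegral_mul_sq {w f : X → ℝ≥0∞}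
    (hw : AEMeasurable w τ) (hf : AEMeasurable f τ) :
    (∫⁻ x, w x * f x ∂τ) ^ 2 ≤ (∫⁻ x, w x ∂τ) * ∫⁻ x, w x * f x ^ 2 ∂τ := by
  have half : (2⁻¹ : ℝ) + 2⁻¹ = 1 := by norm_num
  have hsqrt : ∀ y : ℝ≥0∞, (y ^ (2⁻¹ : ℝ)) ^ 2 = y := fun y ↦ by
    rw [← ENNReal.rpow_natCast, ← ENNReal.rpow_mul]; norm_num
  -- `w * f = w ^ ½ * (w * f ^ 2) ^ ½`, so this is Hölder with exponents `½, ½`.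
  have hsplit : ∀ x, w x * f x = w x ^ (2⁻¹ : ℝ) * (w x * f x ^ 2) ^ (2⁻¹ : ℝ) := fun x ↦ by
    rw [ENNReal.mul_rpow_of_nonneg _ _ (by norm_num), ← mul_assoc,
      ← ENNReal.rpow_add_of_nonneg _ _ (by norm_num) (by norm_num), half, ENNReal.rpow_one,
      ← ENNReal.rpow_natCast, ← ENNReal.rpow_mul]
    norm_num
  calc (∫⁻ x, w x * f x ∂τ) ^ 2
      = (∫⁻ x, w x ^ (2⁻¹ : ℝ) * (w x * f x ^ 2) ^ (2⁻¹ : ℝ) ∂τ) ^ 2 := by simp_rw [hsplit]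
    _ ≤ ((∫⁻ x, w x ∂τ) ^ (2⁻¹ : ℝ) * (∫⁻ x, w x * f x ^ 2 ∂τ) ^ (2⁻¹ : ℝ)) ^ 2 :=
        pow_le_pow_left' (ENNReal.lintegral_mul_norm_pow_le hw (hw.mul (hf.pow_const 2))
          (by norm_num) (by norm_num) half) 2
    _ = (∫⁻ x, w x ∂τ) * ∫⁻ x, w x * f x ^ 2 ∂τ := by rw [mul_pow, hsqrt, hsqrt]

theorem memLp_two_iff_lintegral_enorm_sq_lt_top {E : Type*} [NormedAddCommGroup E] {f : X → E} :
    MemLp f 2 τ ↔ AEStronglyMeasurable f τ ∧ ∫⁻ x, ‖f x‖ₑ ^ 2 ∂τ < ∞ := by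
  rw [MemLp, eLpNorm_lt_top_iff_lintegral_rpow_enorm_lt_top two_ne_zero ENNReal.ofNat_ne_top]
  simp

end

theorem lintegral_sq_lintegral_mul_le_of_lintegral_le {M N : Type*} [MeasurableSpace M]
    [MeasurableSpace N] {μ : Measure M} {ν : Measure N} [SFinite μ] [SFinite ν]
    {k : M → N → ℝ≥0∞} (hk : Measurable (Function.uncurry k)) {f : N → ℝ≥0∞}
    (hf : AEMeasurable f ν) {A B : ℝ≥0∞} (hA : ∀ p, ∫⁻ q, k p q ∂ν ≤ A)
    (hB : ∀ q, ∫⁻ p, k p q ∂μ ≤ B) :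
    ∫⁻ p, (∫⁻ q, k p q * f q ∂ν) ^ 2 ∂μ ≤ A * B * ∫⁻ q, f q ^ 2 ∂ν := by
  have hkp : ∀ p, Measurable (k p) := fun p ↦ hk.comp measurable_prodMk_left
  have hkq : ∀ q, Measurable (k · q) := fun q ↦ hk.comp measurable_prodMk_right
  have hweighted : AEMeasurable (Function.uncurry fun p q ↦ k p q * f q ^ 2) (μ.prod ν) :=
    hk.aemeasurable.mul (hf.comp_snd.pow_const 2)
  calc ∫⁻ p, (∫⁻ q, k p q * f q ∂ν) ^ 2 ∂μ
      ≤ ∫⁻ p, A * ∫⁻ q, k p q * f q ^ 2 ∂ν ∂μ := lintegral_mono fun p ↦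
        (sq_lintegral_mul_le_lintegral_mul_lintegral_mul_sq (hkp p).aemeasurable hf).trans
          (mul_le_mul_left (hA p) _)
    _ = A * ∫⁻ q, ∫⁻ p, k p q * f q ^ 2 ∂μ ∂ν := by
        rw [lintegral_const_mul'' A (f := fun p ↦ ∫⁻ q, k p q * f q ^ 2 ∂ν)
          hweighted.lintegral_prod_right', lintegral_lintegral_swap hweighted]
    _ = A * ∫⁻ q, (∫⁻ p, k p q ∂μ) * f q ^ 2 ∂ν := by
        simp_rw [lintegral_mul_const _ (hkq _)]
    _ ≤ A * ∫⁻ q, B * f q ^ 2 ∂ν := by gcongr with q; exact hB q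
    _ = A * B * ∫⁻ q, f q ^ 2 ∂ν := by rw [lintegral_const_mul'' _ (hf.pow_const 2), mul_assoc]

/-- Integral operators with a uniformly bounded kernel whose supports are
uniformly bounded in measure in each variable are bounded on `L²`:
`∫ |∫ K(p,q) α(q) dν|² dμ ≤ S·R·L² ∫ |α|² dν`. -/
theorem integral_operator_L2_bounded
    {M N : Type*} [MeasurableSpace M] [MeasurableSpace N]
    (μ : Measure M) (ν : Measure N) [SigmaFinite μ] [SigmaFinite ν]
    (K : M × N → ℂ) (hK : Measurable K)
    (L R S : NNReal)
    (hL : ∀ p q, ‖K (p, q)‖ ≤ L)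
    (hR : ∀ q, μ {p | K (p, q) ≠ 0} ≤ (R : ENNReal))
    (hS : ∀ p, ν {q | K (p, q) ≠ 0} ≤ (S : ENNReal)) :
    ∀ α : N → ℂ, MemLp α 2 ν →
      MemLp (fun p => ∫ q, K (p, q) * α q ∂ν) 2 μ ∧
      (∫⁻ p, (‖∫ q, K (p, q) * α q ∂ν‖₊ : ENNReal) ^ 2 ∂μ)
        ≤ (S : ENNReal) * (R : ENNReal) * (L : ENNReal) ^ 2
            * ∫⁻ q, (‖α q‖₊ : ENNReal) ^ 2 ∂ν := by
  intro α hα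
  obtain ⟨hαm, hαfin⟩ := memLp_two_iff_lintegral_enorm_sq_lt_top.1 hα
  have hrow : ∀ p, ∫⁻ q, ‖K (p, q)‖ₑ ∂ν ≤ L * S := fun p ↦
    (lintegral_enorm_le_mul_measure_support (hL p)).trans (mul_le_mul_right (hS p) _)
  have hcol : ∀ q, ∫⁻ p, ‖K (p, q)‖ₑ ∂μ ≤ L * R := fun q ↦
    (lintegral_enorm_le_mul_measure_support (hL · q)).trans (mul_le_mul_right (hR q) _)
  have hpointwise : ∀ p, ‖∫ q, K (p, q) * α q ∂ν‖ₑ ≤ ∫⁻ q, ‖K (p, q)‖ₑ * ‖α q‖ₑ ∂ν := fun p ↦ by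
    simpa only [enorm_mul] using enorm_integral_le_lintegral_enorm (μ := ν) fun q ↦ K (p, q) * α q
  have hbound : ∫⁻ p, ‖∫ q, K (p, q) * α q ∂ν‖ₑ ^ 2 ∂μ ≤ S * R * L ^ 2 * ∫⁻ q, ‖α q‖ₑ ^ 2 ∂ν :=
    calc ∫⁻ p, ‖∫ q, K (p, q) * α q ∂ν‖ₑ ^ 2 ∂μ
        ≤ ∫⁻ p, (∫⁻ q, ‖K (p, q)‖ₑ * ‖α q‖ₑ ∂ν) ^ 2 ∂μ := by gcongr with p; exact hpointwise p
      _ ≤ L * S * (L * R) * ∫⁻ q, ‖α q‖ₑ ^ 2 ∂ν :=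
        lintegral_sq_lintegral_mul_le_of_lintegral_le hK.enorm hαm.enorm hrow hcol
      _ = S * R * L ^ 2 * ∫⁻ q, ‖α q‖ₑ ^ 2 ∂ν := by ring
  refine ⟨memLp_two_iff_lintegral_enorm_sq_lt_top.2 ⟨?_, hbound.trans_lt ?_⟩, hbound⟩
  · exact (hK.aestronglyMeasurable.mul hαm.comp_snd).integral_prod_right'
  · exact ENNReal.mul_lt_top (by simp [ENNReal.mul_lt_top]) hαfin
end

section
/- Let (M,μ) and (N,ν) be σ-finite measure spaces and let K : M × [0,1] × N → ℂ be such that (p,q) ↦ K(p,t,q) is measurable for each t ∈ [0,1], the map t ↦ K(p,t,q) is differentiable with |∂K/∂t(p,t,q)| ≤ C for all (p,t,q), and there exist constants R, S such that μ({p ∈ M : K(p,t,q) ≠ 0 for some t ∈ [0,1]}) ≤ R for every q ∈ N and ν({q ∈ N : K(p,t,q) ≠ 0 for some t ∈ [0,1]}) ≤ S for every p ∈ M. For s ∈ [0,1] let A_s : L²(ν) → L²(μ) denote the integral operator with kernel K(·,s,·). Then for all s, s' ∈ [0,1] and every α ∈ L²(ν), ‖A_{s'}α − A_s α‖_{L²(μ)}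 ≤ √(S·R)·C·|s' − s|·‖α‖_{L²(ν)}; hence ‖A_{s'} − A_s‖ ≤ √(S·R)·C·|s' − s|, so s ↦ A_s is Lipschitz in operator norm. -/
/-!
By the mean value theorem the difference kernel `K(·,s',·) - K(·,s,·)` is bounded by
`C|s' - s|`, and it vanishes outside the uniform supports of `K`. Hence its row integrals are at
most `C|s' - s| S` and its column integrals at most `C|s' - s| R`, and the Schur test bounds the
`L²` norm of the associated integral operator by the geometric mean `√(SR) C|s' - s|`.
-/

open MeasureTheory
open scoped ENNReal NNReal

namespace MeasureTheory

variable {M N : Type*} [MeasurableSpace M] [MeasurableSpace N] {μ : Measure M} {ν : Measure N}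

lemma eLpNorm_two_sq {E : Type*} [NormedAddCommGroup E] (f : M → E) :
    eLpNorm f 2 μ ^ 2 = ∫⁻ x, ‖f x‖ₑ ^ 2 ∂μ := by
  have := eLpNorm_nnreal_pow_eq_lintegral (f := f) (μ := μ) (p := 2) two_ne_zero
  simpa [ENNReal.rpow_two] using this

-- No integrability is assumed: if exactly one of `f`, `h` is integrable, the right side is `∞`.
lemma enorm_integral_sub_integral_le {E : Type*} [NormedAddCommGroup E] [NormedSpace ℝ E]
    {f h : N → E} (hf : AEStronglyMeasurable f ν) (hh : AEStronglyMeasurable h ν) :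
    ‖(∫ q, f q ∂ν) - ∫ q, h q ∂ν‖ₑ ≤ ∫⁻ q, ‖f q - h q‖ₑ ∂ν := by
  by_cases hfh : Integrable (f - h) ν
  · by_cases hhi : Integrable h ν
    · have hfi : Integrable f ν := by simpa using hfh.add hhi
      rw [← integral_sub hfi hhi]
      exact enorm_integral_le_lintegral_enorm _
    · have hfi : ¬ Integrable f ν := fun hfi => hhi (by simpa using hfi.sub hfh)
      simp [integral_undef hfi, integral_undef hhi]
  · have : ∫⁻ q, ‖f q - h q‖ₑ ∂ν = ∞ := by
      by_contra hne
      exact hfh ⟨hf.sub hh, lt_top_iff_ne_top.2 hne⟩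
    simp [this]

lemma sq_lintegral_mul_le_lintegral_mul_lintegral_mul_sq {k f : N → ℝ≥0∞}
    (hk : AEMeasurable k ν) (hf : AEMeasurable f ν) :
    (∫⁻ q, k q * f q ∂ν) ^ 2 ≤ (∫⁻ q, k q ∂ν) * ∫⁻ q, k q * f q ^ 2 ∂ν := by
  have hsplit : ∀ q, k q * f q = k q ^ (1 / 2 : ℝ) * (k q * f q ^ 2) ^ (1 / 2 : ℝ) := by
    intro q
    rw [ENNReal.mul_rpow_of_nonneg _ _ (by norm_num), ← mul_assoc,
      ← ENNReal.rpow_add_of_nonneg _ _ (by norm_num) (by norm_num), ← ENNReal.rpow_natCast,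
      ← ENNReal.rpow_mul]
    norm_num
  have holder := ENNReal.lintegral_mul_norm_pow_le (g := fun q => k q * f q ^ 2) hk
    (hk.mul (hf.pow_const 2)) (p := 1 / 2) (q := 1 / 2) (by norm_num) (by norm_num) (by norm_num)
  simp_rw [← hsplit] at holder
  calc (∫⁻ q, k q * f q ∂ν) ^ 2
      ≤ ((∫⁻ q, k q ∂ν) ^ (1 / 2 : ℝ) * (∫⁻ q, k q * f q ^ 2 ∂ν) ^ (1 / 2 : ℝ)) ^ 2 := by
        gcongr
    _ = (∫⁻ q, k q ∂ν) * ∫⁻ q, k q * f q ^ 2 ∂ν := by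
        rw [mul_pow, ← ENNReal.rpow_natCast, ← ENNReal.rpow_mul, ← ENNReal.rpow_natCast,
          ← ENNReal.rpow_mul]
        norm_num

/-- The Schur test. -/
lemma lintegral_sq_lintegral_kernel_mul_le [SFinite μ] [SFinite ν] {k : M → N → ℝ≥0∞}
    (hk : Measurable (Function.uncurry k)) {f : N → ℝ≥0∞} (hf : AEMeasurable f ν) {A B : ℝ≥0∞}
    (hA : ∀ p, ∫⁻ q, k p q ∂ν ≤ A) (hB : ∀ q, ∫⁻ p, k p q ∂μ ≤ B) :
    ∫⁻ p, (∫⁻ q, k p q * f q ∂ν) ^ 2 ∂μ ≤ A * B * ∫⁻ q, f q ^ 2 ∂ν := by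
  have hk_row : ∀ p, Measurable (k p) := fun p => hk.comp measurable_prodMk_left
  have hk_col : ∀ q, Measurable fun p => k p q := fun q => hk.comp measurable_prodMk_right
  have hkf : AEMeasurable (Function.uncurry fun p q => k p q * f q ^ 2) (μ.prod ν) :=
    hk.aemeasurable.mul (hf.pow_const 2).comp_snd
  calc ∫⁻ p, (∫⁻ q, k p q * f q ∂ν) ^ 2 ∂μ
      ≤ ∫⁻ p, A * ∫⁻ q, k p q * f q ^ 2 ∂ν ∂μ := by
        refine lintegral_mono fun p => ?_
        grw [sq_lintegral_mul_le_lintegral_mul_lintegral_mul_sq (hk_row p).aemeasurable hf, hA p]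
    _ = A * ∫⁻ q, f q ^ 2 * ∫⁻ p, k p q ∂μ ∂ν := by
        have hrow : AEMeasurable (fun p => ∫⁻ q, k p q * f q ^ 2 ∂ν) μ :=
          hkf.lintegral_prod_right'
        rw [lintegral_const_mul'' _ hrow, lintegral_lintegral_swap hkf]
        simp_rw [mul_comm (k _ _), lintegral_const_mul'' _ (hk_col _).aemeasurable]
    _ ≤ A * ∫⁻ q, f q ^ 2 * B ∂ν := by gcongr with q; exact hB q
    _ = A * B * ∫⁻ q, f q ^ 2 ∂ν := by
        rw [lintegral_mul_const'' _ (hf.pow_const 2), mul_assoc, mul_comm B]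

lemma eLpNorm_two_sq_le_of_enorm_le_lintegral_kernel [SFinite μ] [SFinite ν]
    {E F : Type*} [NormedAddCommGroup E] [NormedAddCommGroup F] {k : M → N → ℝ≥0∞}
    (hk : Measurable (Function.uncurry k)) {T : M → E} {α : N → F}
    (hα : AEStronglyMeasurable α ν) (hT : ∀ p, ‖T p‖ₑ ≤ ∫⁻ q, k p q * ‖α q‖ₑ ∂ν)
    {A B : ℝ≥0∞} (hA : ∀ p, ∫⁻ q, k p q ∂ν ≤ A) (hB : ∀ q, ∫⁻ p, k p q ∂μ ≤ B) :
    eLpNorm T 2 μ ^ 2 ≤ A * B * eLpNorm α 2 ν ^ 2 := by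
  rw [eLpNorm_two_sq, eLpNorm_two_sq]
  calc ∫⁻ p, ‖T p‖ₑ ^ 2 ∂μ ≤ ∫⁻ p, (∫⁻ q, k p q * ‖α q‖ₑ ∂ν) ^ 2 ∂μ := by
        gcongr with p; exact hT p
    _ ≤ A * B * ∫⁻ q, ‖α q‖ₑ ^ 2 ∂ν :=
        lintegral_sq_lintegral_kernel_mul_le hk hα.enorm hA hB

lemma lintegral_enorm_le_mul_measure_support {E : Type*} [NormedAddCommGroup E] {f : N → E}
    {c : ℝ≥0∞} (hf : ∀ q, ‖f q‖ₑ ≤ c) : ∫⁻ q, ‖f q‖ₑ ∂ν ≤ c * ν (Function.support f) := by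
  calc ∫⁻ q, ‖f q‖ₑ ∂ν ≤ ∫⁻ q, (Function.support f).indicator (fun _ => c) q ∂ν := by
        refine lintegral_mono fun q => ?_
        by_cases hq : q ∈ Function.support f
        · simpa [Set.indicator_of_mem hq] using hf q
        · simp [Function.notMem_support.1 hq]
    _ ≤ c * ν (Function.support f) := lintegral_indicator_const_le _ _

lemma eLpNorm_two_sq_le_of_enorm_le_lintegral_of_support_le [SFinite μ] [SFinite ν]
    {E F G : Type*} [NormedAddCommGroup E] [NormedAddCommGroup F] [NormedAddCommGroup G]
    [MeasurableSpace G] [OpensMeasurableSpace G] {g : M → N → G}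
    (hg : Measurable (Function.uncurry g)) {c R S : ℝ≥0∞} (hc : ∀ p q, ‖g p q‖ₑ ≤ c)
    (hR : ∀ q, μ (Function.support fun p => g p q) ≤ R) (hS : ∀ p, ν (Function.support (g p)) ≤ S)
    {T : M → E} {α : N → F} (hα : AEStronglyMeasurable α ν)
    (hT : ∀ p, ‖T p‖ₑ ≤ ∫⁻ q, ‖g p q‖ₑ * ‖α q‖ₑ ∂ν) :
    eLpNorm T 2 μ ^ 2 ≤ c * S * (c * R) * eLpNorm α 2 ν ^ 2 :=
  eLpNorm_two_sq_le_of_enorm_le_lintegral_kernel hg.enorm hα hT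
    (fun p => (lintegral_enorm_le_mul_measure_support (hc p)).trans (by gcongr; exact hS p))
    (fun q => (lintegral_enorm_le_mul_measure_support (hc · q)).trans (by gcongr; exact hR q))

end MeasureTheory

/-- For a kernel `K(p,t,q)` on `M × [0,1] × N`, measurable in `(p,q)` for each
`t`, with `|∂K/∂t| ≤ C` and supports of measure at most `R` (resp. `S`) in each variable,
the sliced integral operators `A_s` satisfy
`‖A_{s'} α − A_s α‖_{L²(μ)} ≤ √(S·R)·C·|s' − s|·‖α‖_{L²(ν)}`, so `s ↦ A_s` is Lipschitz in
operator norm. -/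
theorem sliced_integral_operators_lipschitz
    {M N : Type*} [MeasurableSpace M] [MeasurableSpace N]
    (μ : Measure M) (ν : Measure N) [SigmaFinite μ] [SigmaFinite ν]
    (K K' : M → ℝ → N → ℂ) (C R S : NNReal)
    (hmeas : ∀ t ∈ Set.Icc (0:ℝ) 1, Measurable fun pq : M × N => K pq.1 t pq.2)
    (hderiv : ∀ p q, ∀ t ∈ Set.Icc (0:ℝ) 1, HasDerivAt (fun s => K p s q) (K' p t q) t)
    (hC : ∀ p q, ∀ t ∈ Set.Icc (0:ℝ) 1, ‖K' p t q‖ ≤ C)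
    (hR : ∀ q, μ {p | ∃ t ∈ Set.Icc (0:ℝ) 1, K p t q ≠ 0} ≤ (R : ENNReal))
    (hS : ∀ p, ν {q | ∃ t ∈ Set.Icc (0:ℝ) 1, K p t q ≠ 0} ≤ (S : ENNReal)) :
    ∀ s ∈ Set.Icc (0:ℝ) 1, ∀ s' ∈ Set.Icc (0:ℝ) 1, ∀ α : N → ℂ, MemLp α 2 ν →
      eLpNorm (fun p => (∫ q, K p s' q * α q ∂ν) - ∫ q, K p s q * α q ∂ν) 2 μ
        ≤ ENNReal.ofReal (Real.sqrt ((S : ℝ) * (R : ℝ)) * (C : ℝ) * |s' - s|)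
            * eLpNorm α 2 ν := by
  intro s hs s' hs' α hα
  set c := ENNReal.ofReal (C * |s' - s|)
  have hK_slice : ∀ t ∈ Set.Icc (0:ℝ) 1, ∀ p, Measurable (K p t) :=
    fun t ht p => (hmeas t ht).comp measurable_prodMk_left
  have hdiff_le : ∀ p q, ‖K p s' q - K p s q‖ₑ ≤ c := fun p q => by
    rw [← ofReal_norm]
    refine ENNReal.ofReal_le_ofReal ?_
    simpa [Real.norm_eq_abs] using (convex_Icc (0:ℝ) 1).norm_image_sub_le_of_norm_hasDerivWithin_le
      (fun t ht => (hderiv p q t ht).hasDerivWithinAt) (hC p q) hs hs'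
  have hdiff_ne : ∀ p q, K p s' q - K p s q ≠ 0 → ∃ t ∈ Set.Icc (0:ℝ) 1, K p t q ≠ 0 := by
    intro p q hpq
    by_contra! h
    simp [h s' hs', h s hs] at hpq
  have hT : ∀ p, ‖(∫ q, K p s' q * α q ∂ν) - ∫ q, K p s q * α q ∂ν‖ₑ
      ≤ ∫⁻ q, ‖K p s' q - K p s q‖ₑ * ‖α q‖ₑ ∂ν := fun p => by
    refine (enorm_integral_sub_integral_le ((hK_slice s' hs' p).aestronglyMeasurable.mul hα.1)
      ((hK_slice s hs p).aestronglyMeasurable.mul hα.1)).trans_eq ?_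
    simp only [Pi.mul_apply, ← sub_mul, enorm_mul]
  have hsq := eLpNorm_two_sq_le_of_enorm_le_lintegral_of_support_le
    ((hmeas s' hs').sub (hmeas s hs)) hdiff_le
    (fun q => (measure_mono fun p => hdiff_ne p q).trans (hR q))
    (fun p => (measure_mono fun q => hdiff_ne p q).trans (hS p)) hα.1 hT
  rw [← ENNReal.pow_le_pow_left_iff two_ne_zero, mul_pow, ← ENNReal.ofReal_pow (by positivity)]
  convert hsq using 2
  rw [mul_pow, mul_pow, Real.sq_sqrt (by positivity)]
  simp only [c, ← ENNReal.ofReal_coe_nnreal]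
  rw [← ENNReal.ofReal_mul (by positivity), ← ENNReal.ofReal_mul (by positivity),
    ← ENNReal.ofReal_mul (by positivity)]
  ring_nf
end

section
/- Let H be a complex Hilbert space and let W₁, W₂ : H → H be bounded self-adjoint operators with W₁² = I, W₂² = I, and ‖W₁ − W₂‖ ≤ 1. For i = 1, 2 let E_i = {v ∈ H : W_i v = v} be the +1-eigenspace of W_i, a closed subspace, so that ½(I + W_i) is the orthogonal projection onto E_i. Then the map F : E₂ → E₁ given by F(v) = ½(v + W₁ v) is a bijective bounded linear map; in fact, the composition G∘F : E₂ → E₂ of F with G : E₁ → E₂, G(w) = ½(w + W₂ w), satisfies G(F(v)) = v + ¼(I + W₂)(W₁ − W₂)v, which is an invertible perturbation of the identity of norm-distance at most ½ from it, and similarly for F∘G. -/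
/-!
`P = ½(1 + W)` is the orthogonal projection onto the `+1`-eigenspace of a self-adjoint involution
`W`, so `‖P‖ ≤ 1`. For `W₂ v = v` one has `P₂ (P₁ v) - v = ½ P₂ ((W₁ - W₂) v)`, of norm at most
`½ ‖v‖`. Hence `P₁` is injective on `E₂`, and `P₁ P₂` is invertible on the closed subspace `E₁`
by a Neumann series, so `P₁` maps `E₂` onto `E₁`.
-/

open Set ContinuousLinearMap

section Perturbation

variable {𝕜 E F : Type*} [NontriviallyNormedField 𝕜] [NormedAddCommGroup E] [NormedSpace 𝕜 E]
  [NormedAddCommGroup F] [NormedSpace 𝕜 F]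

theorem injOn_of_norm_comp_sub_le {K : Submodule 𝕜 E} {f : E →L[𝕜] F} (g : F →L[𝕜] E) {c : ℝ}
    (hc : c < 1) (h : ∀ u ∈ K, ‖g (f u) - u‖ ≤ c * ‖u‖) : InjOn f K := by
  intro u hu u' hu' huu'
  have hle := h (u - u') (K.sub_mem hu hu')
  rw [map_sub, huu', sub_self, map_zero, zero_sub, norm_neg] at hle
  have : ‖u - u'‖ ≤ 0 := by nlinarith [norm_nonneg (u - u')]
  exact sub_eq_zero.1 (norm_le_zero_iff.1 this)

theorem surjOn_of_norm_sub_le [CompleteSpace E] {K : Submodule 𝕜 E} (hK : IsClosed (K : Set E))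
    {T : E →L[𝕜] E} (hTK : MapsTo T K K) {c : ℝ} (hc₀ : 0 ≤ c) (hc : c < 1)
    (h : ∀ u ∈ K, ‖T u - u‖ ≤ c * ‖u‖) : SurjOn T K K := by
  have : CompleteSpace K := hK.completeSpace_coe
  let S : K →L[𝕜] K := (T ∘L K.subtypeL).codRestrict K fun u => hTK u.2
  have hS : ‖1 - S‖ < 1 := by
    refine (opNorm_le_bound _ hc₀ fun u => ?_).trans_lt hc
    change ‖u - S u‖ ≤ c * ‖u‖
    rw [norm_sub_rev]
    exact h u u.2
  have hSunit : IsUnit S := sub_sub_self (1 : K →L[𝕜] K) S ▸ (Units.oneSub _ hS).isUnit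
  intro w hw
  obtain ⟨u, hu⟩ := (isUnit_iff_bijective.1 hSunit).2 ⟨w, hw⟩
  exact ⟨u, u.2, congr_arg Subtype.val hu⟩

end Perturbation

theorem IsSelfAdjoint.isStarProjection_two_inv_smul_one_add {𝕜 A : Type*} [RCLike 𝕜] [Ring A]
    [StarRing A] [Algebra 𝕜 A] [StarModule 𝕜 A] {a : A} (ha : IsSelfAdjoint a)
    (h : a * a = 1) : IsStarProjection ((2 : 𝕜)⁻¹ • (1 + a)) where
  isIdempotentElem := by
    rw [IsIdempotentElem, smul_mul_smul_comm, add_mul, mul_add, mul_add, h]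
    simp only [mul_one, one_mul]
    module
  isSelfAdjoint := by
    rw [IsSelfAdjoint, star_smul, star_add, star_one, ha.star_eq, star_inv₀, star_ofNat]

namespace ContinuousLinearMap

section FixedProj

variable {𝕜 E : Type*} [RCLike 𝕜] [NormedAddCommGroup E] [NormedSpace 𝕜 E]

def fixedProj (W : E →L[𝕜] E) : E →L[𝕜] E := (2 : 𝕜)⁻¹ • (1 + W)

theorem fixedProj_apply (W : E →L[𝕜] E) (v : E) : fixedProj W v = (2 : 𝕜)⁻¹ • (v + W v) := rfl

theorem apply_fixedProj {W : E →L[𝕜] E} (hW : W ∘L W = 1) (v : E) :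
    W (fixedProj W v) = fixedProj W v := by
  have hWW : W (W v) = v := DFunLike.congr_fun hW v
  rw [fixedProj_apply, map_smul, map_add, hWW, add_comm]

theorem fixedProj_apply_of_apply_eq_self {W : E →L[𝕜] E} {v : E} (hv : W v = v) :
    fixedProj W v = v := by
  rw [fixedProj_apply, hv]
  module

theorem fixedProj_fixedProj_apply {W₁ W₂ : E →L[𝕜] E} {v : E} (hv : W₂ v = v) :
    fixedProj W₂ (fixedProj W₁ v) = v + (2 : 𝕜)⁻¹ • fixedProj W₂ ((W₁ - W₂) v) := by
  have hW₁v : fixedProj W₁ v = v + (2 : 𝕜)⁻¹ • (W₁ - W₂) v := by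
    rw [fixedProj_apply, sub_apply, hv]
    module
  rw [hW₁v, map_add, map_smul, fixedProj_apply_of_apply_eq_self hv]

end FixedProj

section Hilbert

variable {𝕜 E : Type*} [RCLike 𝕜] [NormedAddCommGroup E] [InnerProductSpace 𝕜 E] [CompleteSpace E]

theorem norm_fixedProj_le_one {W : E →L[𝕜] E} (hW : IsSelfAdjoint W) (hWW : W ∘L W = 1) :
    ‖fixedProj W‖ ≤ 1 :=
  (hW.isStarProjection_two_inv_smul_one_add hWW).norm_le

theorem norm_fixedProj_fixedProj_sub_le {W₁ W₂ : E →L[𝕜] E} (hW₂ : IsSelfAdjoint W₂)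
    (hW₂W₂ : W₂ ∘L W₂ = 1) {v : E} (hv : W₂ v = v) :
    ‖fixedProj W₂ (fixedProj W₁ v) - v‖ ≤ 2⁻¹ * ‖W₁ - W₂‖ * ‖v‖ := by
  rw [fixedProj_fixedProj_apply hv, add_sub_cancel_left, norm_smul, norm_inv, RCLike.norm_ofNat,
    mul_assoc]
  gcongr
  calc ‖fixedProj W₂ ((W₁ - W₂) v)‖ ≤ ‖fixedProj W₂‖ * ‖(W₁ - W₂) v‖ := le_opNorm _ _
    _ ≤ 1 * (‖W₁ - W₂‖ * ‖v‖) := by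
      gcongr
      exacts [norm_fixedProj_le_one hW₂ hW₂W₂, le_opNorm _ _]
    _ = ‖W₁ - W₂‖ * ‖v‖ := one_mul _

end Hilbert

end ContinuousLinearMap

/-- Let `W₁`, `W₂` be bounded self-adjoint involutions on a complex Hilbert
space with `‖W₁ − W₂‖ ≤ 1`, and let `E_i` be the `+1`-eigenspace of `W_i`. Then
`F : E₂ → E₁`, `F v = ½(v + W₁ v)`, is a bijective bounded linear map; with
`G w = ½(w + W₂ w)` one has, on `E₂`, `G(F v) = v + ¼(I + W₂)(W₁ − W₂)v`, an invertible
perturbation of the identity at norm-distance at most `½`, and similarly for `F ∘ G`. -/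
theorem eigenspace_bijection_of_close_involutions
    {H : Type*} [NormedAddCommGroup H] [InnerProductSpace ℂ H] [CompleteSpace H]
    (W₁ W₂ : H →L[ℂ] H)
    (h₁sa : IsSelfAdjoint W₁) (h₂sa : IsSelfAdjoint W₂)
    (h₁inv : W₁ ∘L W₁ = 1) (h₂inv : W₂ ∘L W₂ = 1)
    (hnorm : ‖W₁ - W₂‖ ≤ 1) :
    Set.BijOn (fun v => (2 : ℂ)⁻¹ • (v + W₁ v)) {v : H | W₂ v = v} {v : H | W₁ v = v} ∧
    (∀ v : H, W₂ v = v →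
      (2 : ℂ)⁻¹ • (((2 : ℂ)⁻¹ • (v + W₁ v)) + W₂ ((2 : ℂ)⁻¹ • (v + W₁ v)))
        = v + (4 : ℂ)⁻¹ • ((W₁ - W₂) v + W₂ ((W₁ - W₂) v))) ∧
    (∀ v : H, W₂ v = v →
      ‖(2 : ℂ)⁻¹ • (((2 : ℂ)⁻¹ • (v + W₁ v)) + W₂ ((2 : ℂ)⁻¹ • (v + W₁ v))) - v‖
        ≤ 2⁻¹ * ‖v‖) ∧
    (∀ w : H, W₁ w = w →
      ‖(2 : ℂ)⁻¹ • (((2 : ℂ)⁻¹ • (w + W₂ w)) + W₁ ((2 : ℂ)⁻¹ • (w + W₂ w))) - w‖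
        ≤ 2⁻¹ * ‖w‖) := by
  have half_le : ∀ {c : ℝ} (v : H), c ≤ 1 → 2⁻¹ * c * ‖v‖ ≤ 2⁻¹ * ‖v‖ := fun v hc => by
    have := norm_nonneg v
    nlinarith
  have hGF (v : H) (hv : W₂ v = v) : ‖fixedProj W₂ (fixedProj W₁ v) - v‖ ≤ 2⁻¹ * ‖v‖ :=
    (norm_fixedProj_fixedProj_sub_le h₂sa h₂inv hv).trans (half_le v hnorm)
  have hFG (w : H) (hw : W₁ w = w) : ‖fixedProj W₁ (fixedProj W₂ w) - w‖ ≤ 2⁻¹ * ‖w‖ :=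
    (norm_fixedProj_fixedProj_sub_le h₁sa h₁inv hw).trans (half_le w (norm_sub_rev W₂ W₁ ▸ hnorm))
  -- `W.eqLocus 1` is the eigenspace `{v | W v = v}` as a submodule, definitionally.
  have hinj : InjOn (fixedProj W₁) (W₂.eqLocus 1) :=
    injOn_of_norm_comp_sub_le (fixedProj W₂) (by norm_num) hGF
  have hsurj : SurjOn (fixedProj W₁) (W₂.eqLocus 1) (W₁.eqLocus 1) := by
    intro w hw
    obtain ⟨u, -, rfl⟩ := surjOn_of_norm_sub_le (T := fixedProj W₁ ∘L fixedProj W₂)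
      (isClosed_eqLocus W₁ 1) (fun u _ => apply_fixedProj h₁inv (fixedProj W₂ u))
      (by norm_num) (by norm_num) hFG hw
    exact ⟨fixedProj W₂ u, apply_fixedProj h₂inv u, rfl⟩
  refine ⟨⟨fun v _ => apply_fixedProj h₁inv v, hinj, hsurj⟩, fun v hv => ?_, hGF, hFG⟩
  rw [← fixedProj_apply, ← fixedProj_apply, fixedProj_fixedProj_apply hv, fixedProj_apply,
    smul_smul]
  norm_num
end
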